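/- Let x be a node of the d^n hypermesh and M a set of nodes with x ∉ M. If every edge containing x contains an element of M, then there exists an injective map m : Fin n → M such that for each k : Fin n, the node m(k) differs from x exactly at coordinate k; consequently M has at least n elements, and for k ≠ k' the nodes m(k) and m(k') differ in exactly two coordinates and hence do not lie in any common edge. -/

import Mathlib

/-- The edge (group) through node `x` in direction `k` of the `d^n` hypermesh:
all nodes agreeing with `x` at every coordinate other than `k`. -/
def edgeThrough (n d : ℕ) (k : Fin n) (x : Fin n → Fin d) : Finset (Fin n → Fin d) :=
  Finset.univ.filter (fun y => ∀ j, j ≠ k → y j = x j)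

/-- A set of nodes is an edge of the `d^n` hypermesh when it is the edge through
some node in some direction. -/
def IsEdge (n d : ℕ) (E : Finset (Fin n → Fin d)) : Prop :=
  ∃ k x, E = edgeThrough n d k x

/-- The finset of all edges of the `d^n` hypermesh. -/
def hypermeshEdges (n d : ℕ) : Finset (Finset (Fin n → Fin d)) :=
  Finset.univ.image (fun p : Fin n × (Fin n → Fin d) => edgeThrough n d p.1 p.2)

section DifferingCoordinates

variable {ι α : Type*}

theorem apply_ne_iff_of_agree_off {x y : ι → α} {k : ι} (hagree : ∀ j, j ≠ k → y j = x j)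
    (hne : y ≠ x) (j : ι) : y j ≠ x j ↔ j = k := by
  refine ⟨fun hj => by_contra fun hjk => hj (hagree j hjk), ?_⟩
  rintro rfl hjx
  refine hne (funext fun i => ?_)
  by_cases hi : i = j
  · exact hi ▸ hjx
  · exact hagree i hi

variable {m : ι → ι → α} {x : ι → α}

theorem injective_of_apply_ne_iff (hm : ∀ k j, m k j ≠ x j ↔ j = k) : Function.Injective m := by
  intro k k' hkk'
  have hk : m k k ≠ x k := (hm k k).2 rfl
  exact (hm k' k).1 (by rwa [← hkk'])

theorem filter_apply_ne_eq_pair [Fintype ι] [DecidableEq ι] [DecidableEq α]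
    (hm : ∀ k j, m k j ≠ x j ↔ j = k) {k k' : ι} (hkk' : k ≠ k') :
    Finset.univ.filter (fun j => m k j ≠ m k' j) = {k, k'} := by
  have hagree : ∀ l j, j ≠ l → m l j = x j := fun l j hj => not_not.1 (mt (hm l j).1 hj)
  ext j
  simp only [Finset.mem_filter, Finset.mem_univ, true_and, Finset.mem_insert,
    Finset.mem_singleton]
  constructor
  · intro hj
    by_contra! hjkk'
    exact hj ((hagree k j hjkk'.1).trans (hagree k' j hjkk'.2).symm)
  · rintro (rfl | rfl)
    · rw [hagree k' j hkk']
      exact (hm j j).2 rfl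
    · rw [hagree k j hkk'.symm]
      exact fun h => (hm j j).2 rfl h.symm

end DifferingCoordinates

theorem mem_edgeThrough {n d : ℕ} {k : Fin n} {x y : Fin n → Fin d} :
    y ∈ edgeThrough n d k x ↔ ∀ j, j ≠ k → y j = x j := by
  simp [edgeThrough]

theorem self_mem_edgeThrough {n d : ℕ} (k : Fin n) (x : Fin n → Fin d) :
    x ∈ edgeThrough n d k x :=
  mem_edgeThrough.2 fun _ _ => rfl

theorem card_filter_apply_ne_le_one_of_mem_edgeThrough {n d : ℕ} {k : Fin n}
    {w y z : Fin n → Fin d} (hy : y ∈ edgeThrough n d k w) (hz : z ∈ edgeThrough n d k w) :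
    (Finset.univ.filter (fun j => y j ≠ z j)).card ≤ 1 := by
  refine Finset.card_le_one.2 fun i hi j hj => ?_
  have hsub : ∀ l ∈ Finset.univ.filter (fun j => y j ≠ z j), l = k := fun l hl =>
    by_contra fun hlk => (Finset.mem_filter.1 hl).2
      ((mem_edgeThrough.1 hy l hlk).trans (mem_edgeThrough.1 hz l hlk).symm)
  exact (hsub i hi).trans (hsub j hj).symm

theorem exists_mem_apply_ne_iff_of_covered {n d : ℕ} {x : Fin n → Fin d}
    {M : Finset (Fin n → Fin d)} (hx : x ∉ M)
    (h : ∀ E : Finset (Fin n → Fin d), IsEdge n d E → x ∈ E → ∃ m ∈ M, m ∈ E) (k : Fin n) :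
    ∃ y ∈ M, ∀ j, y j ≠ x j ↔ j = k := by
  obtain ⟨y, hyM, hyE⟩ := h _ ⟨k, x, rfl⟩ (self_mem_edgeThrough k x)
  exact ⟨y, hyM, apply_ne_iff_of_agree_off (mem_edgeThrough.1 hyE) (ne_of_mem_of_not_mem hyM hx)⟩

/-- If every edge containing `x` contains an element of a set `M` of nodes with
`x ∉ M`, then there is an injective map `m : Fin n → M` with `m k` differing from
`x` exactly at coordinate `k`; consequently `M` has at least `n` elements, and for
`k ≠ k'` the nodes `m k` and `m k'` differ in exactly two coordinates and lie in
no common edge. -/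
theorem covered_node_yields_injection {n d : ℕ} (x : Fin n → Fin d)
    (M : Finset (Fin n → Fin d)) (hx : x ∉ M)
    (h : ∀ E : Finset (Fin n → Fin d), IsEdge n d E → x ∈ E → ∃ m ∈ M, m ∈ E) :
    ∃ m : Fin n → (Fin n → Fin d), Function.Injective m ∧
      (∀ k, m k ∈ M ∧ ∀ j, m k j ≠ x j ↔ j = k) ∧
      n ≤ M.card ∧
      ∀ k k', k ≠ k' →
        (Finset.univ.filter (fun j => m k j ≠ m k' j)).card = 2 ∧
        ¬ ∃ E : Finset (Fin n → Fin d), IsEdge n d E ∧ m k ∈ E ∧ m k' ∈ E := by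
  choose m hmM hm using exists_mem_apply_ne_iff_of_covered hx h
  have hinj : Function.Injective m := injective_of_apply_ne_iff hm
  refine ⟨m, hinj, fun k => ⟨hmM k, hm k⟩, ?_, fun k k' hkk' => ?_⟩
  · simpa using Finset.card_le_card_of_injOn (s := Finset.univ) m (fun k _ => hmM k) hinj.injOn
  have htwo : (Finset.univ.filter (fun j => m k j ≠ m k' j)).card = 2 := by
    rw [filter_apply_ne_eq_pair hm hkk', Finset.card_pair hkk']
  refine ⟨htwo, ?_⟩
  rintro ⟨E, ⟨l, w, rfl⟩, hk, hk'⟩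
  have := card_filter_apply_ne_le_one_of_mem_edgeThrough hk hk'
  omega
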